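/- Let S be a free semigroup and A a subsemigroup of S such that Aⁿ ⊆ Sep A for some positive integer n (where Aⁿ is the set of products of n elements of A). Then A is a free subsemigroup of S. -/
import Mathlib


def Separator {S : Type*} [Semigroup S] (A : Set S) : Set S :=
  {x | (∀ a ∈ A, x * a ∈ A ∧ a * x ∈ A) ∧ ∀ b ∈ Aᶜ, x * b ∈ Aᶜ ∧ b * x ∈ Aᶜ}

def IsFreeSubsemigroup {α : Type*} (T : Set (FreeSemigroup α)) : Prop :=
  (∀ x ∈ T, ∀ y ∈ T, x * y ∈ T) ∧
    ∀ s : FreeSemigroup α,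
      (∃ t ∈ T, s * t ∈ T) → (∃ t ∈ T, t * s ∈ T) → s ∈ T

open Pointwise in
/-- `setNPow A k` is the set of products of `k+1` elements of `A`, i.e. `A^(k+1)`. -/
def setNPow {α : Type*} (A : Set (FreeSemigroup α)) : ℕ → Set (FreeSemigroup α)
  | 0 => A
  | k + 1 => setNPow A k * A

theorem pow_subset_sep_free {α : Type*} (A : Set (FreeSemigroup α))
    (hA : ∀ x ∈ A, ∀ y ∈ A, x * y ∈ A) (n : ℕ) (hn : 0 < n)
    (hpow : setNPow A (n - 1) ⊆ Separator A) :
    IsFreeSubsemigroup A := by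
  have hsub : ∀ k, setNPow A k ⊆ A := by
    intro k
    induction k with
    | zero => exact fun x hx => hx
    | succ k ih =>
      rintro x ⟨p, hp, a, ha, rfl⟩
      exact hA p (ih hp) a ha
  refine ⟨hA, fun s _ ht' => ?_⟩
  obtain ⟨t', ht'A, hts⟩ := ht'
  have key : ∀ k, ∃ q ∈ setNPow A k, q * s ∈ A := by
    intro k
    induction k with
    | zero => exact ⟨t', ht'A, hts⟩
    | succ k ih =>
      obtain ⟨q, hq, _⟩ := ih
      refine ⟨q * t', ⟨q, hq, t', ht'A, rfl⟩, ?_⟩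
      rw [mul_assoc]
      exact hA q (hsub k hq) _ hts
  obtain ⟨q, hq, hqs⟩ := key (n - 1)
  by_contra hs
  exact ((hpow hq).2 s hs).1 hqs
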